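/- arXiv:1402.7197 — 2 statements merged into one kernel-verified Lean document; each statement's English description precedes it below -/
import Mathlib

section
/- Let R be a discrete valuation ring with fraction field K, let n be a positive integer, and let G be a subgroup of GL_n(K). Suppose H is a subgroup of G of finite index such that for every h ∈ H, all matrix entries of h and of h⁻¹ lie in (the image of) R. Then there exists T ∈ GL_n(K) such that for every g ∈ G, all matrix entries of T⁻¹·g·T and of its inverse lie in (the image of) R. -/
/-!
Since `H` stabilises the standard lattice `Rⁿ ⊆ Kⁿ`, its translates `g • Rⁿ` (`g ∈ G`) depend
only on the coset `gH`, so there are finitely many of them and their sum `L` is a finitely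
generated `R`-submodule of `Kⁿ` which is stable under `G` and contains `Rⁿ`. Over the principal
ideal domain `R` such an `L` is free on a basis which is also a `K`-basis of `Kⁿ`, that is,
`L = T • Rⁿ` for some `T ∈ GL_n(K)`. Then every `T⁻¹ g T` with `g ∈ G` stabilises `Rⁿ`, which says
exactly that it and its inverse have entries in `R`.
-/

open Pointwise

namespace Submodule

variable {R M Γ : Type*} [Semiring R] [AddCommMonoid M] [Module R M] [Group Γ]
  [DistribMulAction Γ M] [SMulCommClass Γ R M]

theorem smul_iSup_smul (g : Γ) (N : Submodule R M) : g • ⨆ x : Γ, x • N = ⨆ x : Γ, x • N := by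
  rw [smul_iSup']
  simp_rw [smul_smul]
  exact (Group.mulLeft_bijective g).surjective.iSup_comp fun x => x • N

theorem fg_iSup_smul {N : Submodule R M} (hN : N.FG) {H : Subgroup Γ} [H.FiniteIndex]
    (hH : ∀ h ∈ H, h • N = N) : (⨆ g : Γ, g • N).FG := by
  have : (MulAction.stabilizer Γ N).FiniteIndex := Subgroup.finiteIndex_of_le hH
  have : Finite (Set.range fun g : Γ => g • N) :=
    .of_equiv _ (MulAction.orbitEquivQuotientStabilizer Γ N).symm
  have key : (⨆ L : Set.range fun g : Γ => g • N, (L : Submodule R M)).FG :=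
    fg_iSup _ fun ⟨_, _, rfl⟩ => hN.map _
  rwa [iSup_range' (fun L : Submodule R M => L)] at key

end Submodule

theorem Submodule.exists_basis_span_eq_of_fg {R K V : Type*} [CommRing R] [IsDomain R]
    [IsPrincipalIdealRing R] [Field K] [Algebra R K] [IsFractionRing R K] [AddCommGroup V]
    [Module R V] [Module K V] [IsScalarTower R K V] {L : Submodule R V} (hL : L.FG)
    (hspan : span K (L : Set V) = ⊤) :
    ∃ B : Module.Basis (Fin (Module.finrank K V)) K V, span R (Set.range B) = L := by
  have : Module.Finite R L := Module.Finite.iff_fg.mpr hL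
  have : Module.IsTorsionFree R V := .trans_faithfulSMul R K V
  let b := Module.Free.chooseBasis R L
  have hli : LinearIndependent K (L.subtype ∘ b) :=
    (LinearIndependent.iff_fractionRing R K).mp (b.linearIndependent.map' _ L.ker_subtype)
  have hR : span R (Set.range (L.subtype ∘ b)) = L := by
    rw [Set.range_comp, ← map_span, b.span_eq, map_top, range_subtype]
  have hK : ⊤ ≤ span K (Set.range (L.subtype ∘ b)) := by
    rw [← span_span_of_tower R, hR, hspan]
  let B := Module.Basis.mk hli hK
  refine ⟨B.reindex (Fintype.equivFinOfCardEq (Module.finrank_eq_card_basis B).symm), ?_⟩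
  rw [Module.Basis.range_reindex, Module.Basis.coe_mk, hR]

theorem Module.Basis.exists_smul_single_eq {K ι : Type*} [Field K] [Fintype ι] [DecidableEq ι]
    (B : Module.Basis ι K (ι → K)) :
    ∃ T : GL ι K, ∀ j, T • Pi.single j 1 = B j := by
  have := (Pi.basisFun K ι).invertibleToMatrix B
  refine ⟨unitOfInvertible ((Pi.basisFun K ι).toMatrix B), fun j => ?_⟩
  ext i
  simp [Units.smul_def, Module.Basis.toMatrix_apply]

section StdLattice

variable (R K ι : Type*) [CommRing R] [Field K] [Algebra R K] [Fintype ι] [DecidableEq ι]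

def stdLattice : Submodule R (ι → K) := Submodule.span R (Set.range (Pi.basisFun K ι))

variable {R K ι}

theorem mem_stdLattice_iff {v : ι → K} :
    v ∈ stdLattice R K ι ↔ ∀ i, v i ∈ (algebraMap R K).range := by
  rw [stdLattice, Submodule.mem_span_range_iff_exists_fun]
  constructor
  · rintro ⟨c, rfl⟩ i
    exact ⟨c i, by simp [Finset.sum_apply, Pi.single_apply, Algebra.smul_def]⟩
  · intro h
    choose c hc using h
    exact ⟨c, funext fun i => by simp [Finset.sum_apply, Pi.single_apply, Algebra.smul_def, hc]⟩

omit [DecidableEq ι] in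
theorem stdLattice_fg : (stdLattice R K ι).FG :=
  Submodule.fg_span (Set.finite_range _)

omit [DecidableEq ι] in
theorem span_stdLattice : Submodule.span K (stdLattice R K ι : Set (ι → K)) = ⊤ := by
  rw [stdLattice, Submodule.span_span_of_tower, (Pi.basisFun K ι).span_eq]

theorem smul_stdLattice (A : Matrix ι ι K) :
    A • stdLattice R K ι = Submodule.span R (Set.range fun j => A • Pi.basisFun K ι j) := by
  rw [stdLattice, Submodule.smul_span, Set.range_smul]

theorem smul_stdLattice_le_iff (A : Matrix ι ι K) :
    A • stdLattice R K ι ≤ stdLattice R K ι ↔ ∀ i j, A i j ∈ (algebraMap R K).range := by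
  rw [smul_stdLattice, Submodule.span_le, Set.range_subset_iff, forall_comm]
  simp only [SetLike.mem_coe, mem_stdLattice_iff, Pi.basisFun_apply,
    Matrix.smul_eq_mulVec, Matrix.mulVec_single_one, Matrix.col_apply]

theorem smul_stdLattice_eq_iff (g : GL ι K) :
    g • stdLattice R K ι = stdLattice R K ι ↔ ∀ i j,
      (g : Matrix ι ι K) i j ∈ (algebraMap R K).range ∧
        ((g⁻¹ : GL ι K) : Matrix ι ι K) i j ∈ (algebraMap R K).range := by
  simp only [forall_and, ← smul_stdLattice_le_iff, ← Units.smul_def]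
  -- `GL ι K` acts on submodules as the units of `Matrix ι ι K`; that instance is only reached
  -- from the generic action lemmas when their arguments are given explicitly.
  refine ⟨fun h => ⟨h.le, ?_⟩, fun ⟨h, h'⟩ => le_antisymm h ?_⟩
  · calc g⁻¹ • stdLattice R K ι = g⁻¹ • g • stdLattice R K ι := by rw [h]
      _ = stdLattice R K ι := inv_smul_smul g (stdLattice R K ι)
      _ ≤ stdLattice R K ι := le_rfl
  · calc stdLattice R K ι = g • g⁻¹ • stdLattice R K ι := (smul_inv_smul g (stdLattice R K ι)).symm
      _ ≤ g • stdLattice R K ι := Submodule.map_mono h'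

theorem exists_smul_stdLattice_eq [IsDomain R] [IsPrincipalIdealRing R] [IsFractionRing R K]
    {L : Submodule R (ι → K)} (hL : L.FG) (hspan : Submodule.span K (L : Set (ι → K)) = ⊤) :
    ∃ T : GL ι K, T • stdLattice R K ι = L := by
  obtain ⟨B, hB⟩ := Submodule.exists_basis_span_eq_of_fg hL hspan
  obtain ⟨T, hT⟩ := (B.reindex (Fintype.equivOfCardEq (β := ι) (by simp))).exists_smul_single_eq
  refine ⟨T, ?_⟩
  rw [Units.smul_def, smul_stdLattice]
  simp_rw [Pi.basisFun_apply, ← Units.smul_def, hT]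
  rw [Module.Basis.range_reindex, hB]

end StdLattice

theorem conjugate_into_integral_matrices_general (R : Type*) [CommRing R] [IsDomain R]
    [IsDiscreteValuationRing R] (K : Type*) [Field K] [Algebra R K] [IsFractionRing R K]
    (n : ℕ) (G H : Subgroup (GL (Fin n) K))
    (hindex : H.relIndex G ≠ 0)
    (hH : ∀ h ∈ H, ∀ i j,
      ((h : Matrix (Fin n) (Fin n) K) i j ∈ (algebraMap R K).range ∧
       ((h⁻¹ : GL (Fin n) K) : Matrix (Fin n) (Fin n) K) i j ∈ (algebraMap R K).range)) :
    ∃ T : GL (Fin n) K, ∀ g ∈ G, ∀ i j,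
      (((T⁻¹ * g * T : GL (Fin n) K) : Matrix (Fin n) (Fin n) K) i j ∈ (algebraMap R K).range ∧
       (((T⁻¹ * g * T)⁻¹ : GL (Fin n) K) : Matrix (Fin n) (Fin n) K) i j ∈
         (algebraMap R K).range) := by
  set Λ := stdLattice R K (Fin n)
  have : (H.subgroupOf G).FiniteIndex := ⟨hindex⟩
  set L := ⨆ g : G, g • Λ
  have hL : L.FG := Submodule.fg_iSup_smul stdLattice_fg (H := H.subgroupOf G) fun h hh =>
    (smul_stdLattice_eq_iff (h : GL (Fin n) K)).2 (hH h (Subgroup.mem_subgroupOf.1 hh))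
  have hΛL : Λ ≤ L := le_iSup_of_le 1 (one_smul _ _).ge
  have hspan : Submodule.span K (L : Set (Fin n → K)) = ⊤ :=
    top_unique (span_stdLattice.ge.trans (Submodule.span_mono hΛL))
  obtain ⟨T, hT⟩ := exists_smul_stdLattice_eq hL hspan
  refine ⟨T, fun g hg => (smul_stdLattice_eq_iff _).1 ?_⟩
  have hgL : g • L = L := Submodule.smul_iSup_smul (⟨g, hg⟩ : G) Λ
  calc (T⁻¹ * g * T) • Λ = T⁻¹ • g • T • Λ := by rw [mul_smul (T⁻¹ * g) T Λ, mul_smul T⁻¹ g]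
    _ = Λ := by rw [hT, hgL, ← hT, inv_smul_smul T Λ]

/-- Let `R` be a DVR with fraction field `K` and let `G ≤ GL_n(K)`.  If `H ≤ G` has finite
index in `G` and every element of `H` has all entries (of itself and of its inverse) in `R`,
then some `T ∈ GL_n(K)` conjugates all of `G` into matrices with entries in `R`. -/
theorem conjugate_into_integral_matrices (R : Type*) [CommRing R] [IsDomain R]
    [IsDiscreteValuationRing R] (K : Type*) [Field K] [Algebra R K] [IsFractionRing R K]
    (n : ℕ) (hn : 0 < n) (G H : Subgroup (GL (Fin n) K)) (hHG : H ≤ G)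
    (hindex : H.relIndex G ≠ 0)
    (hH : ∀ h ∈ H, ∀ i j,
      ((h : Matrix (Fin n) (Fin n) K) i j ∈ (algebraMap R K).range ∧
       ((h⁻¹ : GL (Fin n) K) : Matrix (Fin n) (Fin n) K) i j ∈ (algebraMap R K).range)) :
    ∃ T : GL (Fin n) K, ∀ g ∈ G, ∀ i j,
      (((T⁻¹ * g * T : GL (Fin n) K) : Matrix (Fin n) (Fin n) K) i j ∈ (algebraMap R K).range ∧
       (((T⁻¹ * g * T)⁻¹ : GL (Fin n) K) : Matrix (Fin n) (Fin n) K) i j ∈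
         (algebraMap R K).range) :=
  conjugate_into_integral_matrices_general R K n G H hindex hH
end

section
/- Let p be a prime, let k be a field of characteristic p, let G be a finite group, and let P be a normal subgroup of G that is a p-group. If V is a simple module over the group algebra k[G], then every element of P acts as the identity on V; that is, the fixed subspace V^P equals V. -/
/-!
The `P`-fixed vectors form a `k[G]`-submodule because `P` is normal. It is nonzero: `P` acts on the
finite `𝔽_p`-span of a `P`-orbit, whose cardinality is a positive power of `p`, so counting orbits
modulo `p` produces a fixed vector besides `0`. Simplicity of `V` then forces `V^P = V`.
-/

theorem smul_mem_span_orbit {n : ℕ} {Q M : Type*} [Monoid Q] [AddCommGroup M] [Module (ZMod n) M]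
    [DistribMulAction Q M] (g : Q) {v x : M}
    (hx : x ∈ Submodule.span (ZMod n) (MulAction.orbit Q v)) :
    g • x ∈ Submodule.span (ZMod n) (MulAction.orbit Q v) := by
  have := Submodule.mem_map_of_mem (f := (DistribSMul.toAddMonoidHom M g).toZModLinearMap n) hx
  rw [Submodule.map_span] at this
  refine Submodule.span_mono ?_ this
  rintro _ ⟨_, ⟨h, rfl⟩, rfl⟩
  exact ⟨g * h, mul_smul g h v⟩

theorem IsPGroup.exists_fixed_ne_zero {p : ℕ} [Fact p.Prime] {Q M : Type*} [Group Q] [Finite Q]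
    (hQ : IsPGroup p Q) [AddCommGroup M] [Module (ZMod p) M] [DistribMulAction Q M]
    [Nontrivial M] : ∃ m : M, m ≠ 0 ∧ ∀ g : Q, g • m = m := by
  obtain ⟨v, hv⟩ := exists_ne (0 : M)
  let W := Submodule.span (ZMod p) (MulAction.orbit Q v)
  have : Module.Finite (ZMod p) W := Module.Finite.span_of_finite _ (Set.finite_range _)
  have : Finite W := Module.finite_of_finite (ZMod p)
  have : Nontrivial W :=
    nontrivial_of_ne ⟨v, Submodule.subset_span (MulAction.mem_orbit_self v)⟩ 0 (by simpa using hv)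
  have hpW : p ∣ Nat.card W := by
    rw [Module.natCard_eq_pow_finrank (K := ZMod p), Nat.card_zmod]
    exact dvd_pow_self p Module.finrank_pos.ne'
  let W' : SubMulAction Q M := ⟨W, fun g _ => smul_mem_span_orbit g⟩
  obtain ⟨⟨m, _⟩, hm, hm0⟩ := hQ.exists_fixed_point_of_prime_dvd_card_of_fixed_point W' hpW
    (a := ⟨0, W.zero_mem⟩) (fun g => Subtype.ext (smul_zero g))
  exact ⟨m, fun h => hm0 (Subtype.ext h.symm), fun g => congrArg Subtype.val (hm g)⟩

namespace MonoidAlgebra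

variable (k : Type*) {G : Type*} (V : Type*) [Group G]

def fixedSubmodule [Semiring k] [AddCommMonoid V] [Module (MonoidAlgebra k G) V]
    (P : Subgroup G) [P.Normal] : Submodule (MonoidAlgebra k G) V where
  carrier := {v | ∀ g ∈ P, of k G g • v = v}
  add_mem' ha hb g hg := by rw [smul_add, ha g hg, hb g hg]
  zero_mem' g _ := smul_zero _
  smul_mem' r v hv := by
    induction r using MonoidAlgebra.induction_linear with
    | zero => intro g _; rw [zero_smul, smul_zero]
    | add r s hr hs => intro g hg; rw [add_smul, smul_add, hr g hg, hs g hg]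
    | single a c =>
      intro g hg
      calc of k G g • single a c • v = single a c • of k G (a⁻¹ * g * a) • v := by
            rw [← mul_smul, ← mul_smul, of_apply, of_apply, single_mul_single, single_mul_single]
            simp [mul_assoc]
        _ = single a c • v := by rw [hv _ (‹P.Normal›.conj_mem' g hg a)]

theorem fixedSubmodule_ne_bot (p : ℕ) [Fact p.Prime] [Ring k] [CharP k p] [Finite G]
    [AddCommGroup V] [Module (MonoidAlgebra k G) V] [Nontrivial V]
    (P : Subgroup G) [P.Normal] (hP : IsPGroup p P) : fixedSubmodule k V P ≠ ⊥ := by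
  let : Module (ZMod p) V :=
    Module.compHom (R := MonoidAlgebra k G) V (singleOneRingHom.comp (ZMod.castHom dvd_rfl k))
  let : DistribMulAction P V := DistribMulAction.compHom V ((of k G).comp P.subtype)
  obtain ⟨v, hv0, hv⟩ := hP.exists_fixed_ne_zero (M := V)
  have hvfix : v ∈ fixedSubmodule k V P := fun g hg => hv ⟨g, hg⟩
  exact fun h => hv0 <| (Submodule.mem_bot _).mp (h ▸ hvfix)

end MonoidAlgebra

/-- If `P` is a normal `p`-subgroup of a finite group `G` and `V` is a simple module over the
group algebra `k[G]`, where `char k = p`, then every element of `P` acts trivially on `V`. -/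
theorem normal_pSubgroup_acts_trivially_on_simple (p : ℕ) [Fact p.Prime]
    (k : Type*) [Field k] [CharP k p]
    (G : Type*) [Group G] [Finite G] (P : Subgroup G) [P.Normal] (hP : IsPGroup p P)
    (V : Type*) [AddCommGroup V] [Module (MonoidAlgebra k G) V]
    (hV : IsSimpleModule (MonoidAlgebra k G) V) :
    ∀ g ∈ P, ∀ v : V, (MonoidAlgebra.of k G g) • v = v := by
  have : Nontrivial V := IsSimpleModule.nontrivial (MonoidAlgebra k G) V
  have hfix : MonoidAlgebra.fixedSubmodule k V P = ⊤ :=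
    (eq_bot_or_eq_top _).resolve_left (MonoidAlgebra.fixedSubmodule_ne_bot k V p P hP)
  intro g hg v
  exact (hfix ▸ Submodule.mem_top : v ∈ MonoidAlgebra.fixedSubmodule k V P) g hg
end
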